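/- Congruence for internal choice in the safety model: for closed processes P and Q, O⟦P ⊕ Q⟧ = O⟦P⟧ ⊔ O⟦Q⟧ (pointwise union of trace sets). -/
import Mathlib


inductive Own | pub | pri
deriving DecidableEq

abbrev Chan := ℕ
abbrev Resource := Chan → Option Own

def Resource.dom (σ : Resource) : Set Chan := {c | (σ c).isSome}

def upd (σ : Resource) (c : Chan) (o : Own) : Resource :=
  fun d => if d = c then some o else σ d

/-- σ ∈ (σ₁ ∥ σ₂): parallel separation. -/
def PSep (σ σ₁ σ₂ : Resource) : Prop :=
  σ.dom = σ₁.dom ∪ σ₂.dom ∧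
  (∀ c, σ₁ c = some Own.pri → σ c = some Own.pri ∧ c ∉ σ₂.dom) ∧
  (∀ c, σ₂ c = some Own.pri → σ c = some Own.pri ∧ c ∉ σ₁.dom)

/-- public lifting σ̂ -/
def pubLift (σ : Resource) : Resource := fun c => (σ c).map fun _ => Own.pub

inductive Act
  | send (c d : Chan)
  | recv (c d : Chan)
  | alloc (c : Chan)
  | tau
  | fault
deriving DecidableEq

inductive ARes | ok (σ : Resource) | top | bot

def act : Act → Resource → ARes
  | .send c d, σ =>
      if (σ c).isSome ∧ (σ d).isSome then
        if σ c = some Own.pub then .ok (upd σ d Own.pub) else .bot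
      else .top
  | .recv c d, σ =>
      if (σ c).isSome then
        if σ c = some Own.pub ∧ σ d ≠ some Own.pri then .ok (upd σ d Own.pub) else .bot
      else .top
  | .alloc c, σ => if (σ c).isSome then .bot else .ok (upd σ c Own.pri)
  | .tau, σ => .ok σ
  | .fault, _ => .top

def dual : Act → Option Act
  | .send c d => some (.recv c d)
  | .recv c d => some (.send c d)
  | _ => none

abbrev Trace := List Act
abbrev Behavior := Resource → Set Trace

/-- Action observables |α|σ -/
def obsA : Act → Resource → Trace
  | .tau, _ => []
  | .alloc _, _ => []
  | .fault, _ => [.fault]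
  | .recv c d, _ => [.recv c d]
  | .send c d, σ => if σ d = some Own.pri then [.alloc d, .send c d] else [.send c d]

/-- Semantic prefixing α ▷ B -/
def pre (α : Act) (B : Behavior) : Behavior := fun σ =>
  {t | ∃ σ' u, act α σ = ARes.ok σ' ∧ u ∈ B σ' ∧ t = obsA α σ ++ u} ∪
  {t | act α σ = ARes.top ∧ t = [Act.fault]} ∪
  {[]}

/-- Trace interleaving t ∥ u -/
def inter : Trace → Trace → Behavior
  | [], [] => fun _ => {[]}
  | [], β :: u' => pre β (inter [] u')
  | α :: t', [] => pre α (inter t' [])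
  | α :: t', β :: u' =>
      pre α (inter t' (β :: u')) ⊔ pre β (inter (α :: t') u') ⊔
      (if dual α = some β then inter t' u' else ⊥)
  termination_by t u => t.length + u.length

/-- Channel expressions: variables or constants. -/
inductive Exp | var (x : ℕ) | ch (c : Chan)
deriving DecidableEq

/-- Prefixes: output ē e' and input e(x). -/
inductive Pre | out (e e' : Exp) | inp (e : Exp) (x : ℕ)
deriving DecidableEq

/-- π-calculus processes.  A summation is represented as a list of
prefixed processes built with `nil`/`sum` (so `nil` is the inert 0). -/
inductive Proc
  | nil
  | sum (π : Pre) (P : Proc) (rest : Proc)   -- π.P + rest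
  | choice (P Q : Proc)
  | nu (x : ℕ) (P : Proc)
  | par (P Q : Proc)
  | fix (X : ℕ) (P : Proc)
  | pvar (X : ℕ)

def substE (e : Exp) (x : ℕ) (c : Chan) : Exp :=
  match e with
  | .var y => if y = x then .ch c else .var y
  | .ch d => .ch d

def substPre (π : Pre) (x : ℕ) (c : Chan) : Pre :=
  match π with
  | .out e e' => .out (substE e x c) (substE e' x c)
  | .inp e y => .inp (substE e x c) y

/-- Substituting channel c for channel variable x. -/
def substC : Proc → ℕ → Chan → Proc
  | .nil, _, _ => .nil
  | .sum (.out e e') P rest, x, c =>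
      .sum (substPre (.out e e') x c) (substC P x c) (substC rest x c)
  | .sum (.inp e y) P rest, x, c =>
      .sum (substPre (.inp e y) x c) (if y = x then P else substC P x c)
        (substC rest x c)
  | .choice P Q, x, c => .choice (substC P x c) (substC Q x c)
  | .nu y P, x, c => .nu y (if y = x then P else substC P x c)
  | .par P Q, x, c => .par (substC P x c) (substC Q x c)
  | .fix X P, x, c => .fix X (substC P x c)
  | .pvar X, _, _ => .pvar X

/-- Substituting process Q for process variable X. -/
def substP : Proc → ℕ → Proc → Proc
  | .nil, _, _ => .nil
  | .sum π P rest, X, Q => .sum π (substP P X Q) (substP rest X Q)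
  | .choice P P', X, Q => .choice (substP P X Q) (substP P' X Q)
  | .nu y P, X, Q => .nu y (substP P X Q)
  | .par P P', X, Q => .par (substP P X Q) (substP P' X Q)
  | .fix Y P, X, Q => .fix Y (if Y = X then P else substP P X Q)
  | .pvar Y, X, Q => if Y = X then Q else .pvar Y

def fcvE : Exp → Set ℕ
  | .var x => {x}
  | .ch _ => ∅

/-- Free channel variables. -/
def fcv : Proc → Set ℕ
  | .nil => ∅
  | .sum (.out e e') P rest => fcvE e ∪ fcvE e' ∪ fcv P ∪ fcv rest
  | .sum (.inp e y) P rest => fcvE e ∪ (fcv P \ {y}) ∪ fcv rest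
  | .choice P Q => fcv P ∪ fcv Q
  | .nu y P => fcv P \ {y}
  | .par P Q => fcv P ∪ fcv Q
  | .fix _ P => fcv P
  | .pvar _ => ∅

/-- Free process variables. -/
def fpv : Proc → Set ℕ
  | .nil => ∅
  | .sum _ P rest => fpv P ∪ fpv rest
  | .choice P Q => fpv P ∪ fpv Q
  | .nu _ P => fpv P
  | .par P Q => fpv P ∪ fpv Q
  | .fix X P => fpv P \ {X}
  | .pvar X => {X}

def chansE : Exp → Set Chan
  | .var _ => ∅
  | .ch c => {c}

/-- Channel constants occurring in a process. -/
def consts : Proc → Set Chan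
  | .nil => ∅
  | .sum (.out e e') P rest => chansE e ∪ chansE e' ∪ consts P ∪ consts rest
  | .sum (.inp e _) P rest => chansE e ∪ consts P ∪ consts rest
  | .choice P Q => consts P ∪ consts Q
  | .nu _ P => consts P
  | .par P Q => consts P ∪ consts Q
  | .fix _ P => consts P
  | .pvar _ => ∅

def Closed (P : Proc) : Prop := fcv P = ∅ ∧ fpv P = ∅

/-- σ ⊢ P✓ -/
def Safe (σ : Resource) (P : Proc) : Prop := Closed P ∧ consts P ⊆ σ.dom

/-- Action generation: P ⟶^α Q. -/
inductive Step : Proc → Act → Proc → Prop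
  | send (c d : Chan) (P rest : Proc) :
      Step (.sum (.out (.ch c) (.ch d)) P rest) (.send c d) P
  | recv (c d : Chan) (x : ℕ) (P rest : Proc) :
      Step (.sum (.inp (.ch c) x) P rest) (.recv c d) (substC P x d)
  | sumRest {rest : Proc} {α : Act} {P' : Proc} (π : Pre) (P : Proc) :
      Step rest α P' → Step (.sum π P rest) α P'
  | chooseL (P Q : Proc) : Step (.choice P Q) .tau P
  | chooseR (P Q : Proc) : Step (.choice P Q) .tau Q
  | alloc (c : Chan) (x : ℕ) (P : Proc) :
      Step (.nu x P) (.alloc c) (substC P x c)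
  | unfold (X : ℕ) (P : Proc) :
      Step (.fix X P) .tau (substP P X (.fix X P))
  | parL {P α P'} (Q : Proc) : Step P α P' → Step (.par P Q) α (.par P' Q)
  | parR {Q α Q'} (P : Proc) : Step Q α Q' → Step (.par P Q) α (.par P Q')
  | comm {P α P' Q β Q'} : Step P α P' → Step Q β Q' → dual α = some β →
      Step (.par P Q) .tau (.par P' Q')

/-- Resource-sensitive stepping: P,σ ⟶^α P',σ'. -/
inductive RStep : Proc → Resource → Act → Proc → Resource → Prop
  | step {P α P' σ σ'} : Step P α P' → act α σ = ARes.ok σ' →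
      RStep P σ α P' σ'
  | fault {P α P' σ} : Step P α P' → act α σ = ARes.top →
      RStep P σ .fault .nil σ

/-- Safety observation O⟦P⟧σ (least fixpoint). -/
inductive Obs : Proc → Resource → Trace → Prop
  | eps (P : Proc) (σ : Resource) : Obs P σ []
  | step {P σ α P' σ' t} : RStep P σ α P' σ' → Obs P' σ' t →
      Obs P σ (obsA α σ ++ t)

theorem obs_choice (P Q : Proc) (hP : Closed P) (hQ : Closed Q) :
    ∀ σ : Resource,
      {t | Obs (Proc.choice P Q) σ t} = {t | Obs P σ t} ∪ {t | Obs Q σ t} := by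
  intro σ
  ext t
  constructor
  · intro h
    cases h with
    | eps => exact Or.inl (Obs.eps P σ)
    | step hr ho =>
      rename_i α P' σ' t'
      cases hr with
      | step hs hact =>
        cases hs with
        | chooseL =>
          simp [act] at hact; subst hact
          exact Or.inl (by simpa [obsA] using ho)
        | chooseR =>
          simp [act] at hact; subst hact
          exact Or.inr (by simpa [obsA] using ho)
      | fault hs hact =>
        cases hs with
        | chooseL => simp [act] at hact
        | chooseR => simp [act] at hact
  · intro h
    cases h with
    | inl h =>
      have := Obs.step (RStep.step (Step.chooseL P Q) rfl) h
      simpa [obsA] using this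
    | inr h =>
      have := Obs.step (RStep.step (Step.chooseR P Q) rfl) h
      simpa [obsA] using this
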